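/- arXiv:2502.15106 — 7 statements merged into one kernel-verified Lean document; each statement's English description precedes it below -/
import Mathlib

section
/- Under the assumptions above, G(w) ≥ (p+2) F(w) for every w ∈ ℝ⁴. -/
open RealInnerProductSpace

/-!
Along the ray `t ↦ t • w`, the function `φ = G - (p+2) F` has derivative
`t⁻¹ (⟪t • w, ∇G (t • w)⟫ - (p+2) G (t • w)) ≥ 0` for `t > 0`, so `φ` is nondecreasing on `[0, 1]`
along the ray; since `G 0 = ⟪0, ∇F 0⟫ = 0` and `F 0 = 0`, this gives `φ w ≥ φ 0 = 0`.
-/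

theorem apply_zero_le_of_fderiv_apply_self_nonneg {E : Type*} [NormedAddCommGroup E]
    [NormedSpace ℝ E] {φ : E → ℝ} (hφ : Differentiable ℝ φ) (h : ∀ x, 0 ≤ fderiv ℝ φ x x)
    (w : E) : φ 0 ≤ φ w := by
  have hderiv : ∀ t : ℝ, HasDerivAt (fun t : ℝ => φ (t • w)) (fderiv ℝ φ (t • w) w) t := by
    intro t
    have hray : HasDerivAt (fun t : ℝ => t • w) w t := by
      simpa using (hasDerivAt_id t).smul_const w
    exact (hφ (t • w)).hasFDerivAt.comp_hasDerivAt t hray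
  have hmono : MonotoneOn (fun t : ℝ => φ (t • w)) (Set.Ici 0) := by
    refine monotoneOn_of_hasDerivWithinAt_nonneg (convex_Ici 0)
      (fun t _ => (hderiv t).continuousAt.continuousWithinAt)
      (fun t _ => (hderiv t).hasDerivWithinAt) fun t ht => ?_
    rw [interior_Ici] at ht
    have hradial : fderiv ℝ φ (t • w) w = t⁻¹ * fderiv ℝ φ (t • w) (t • w) := by
      rw [map_smul, smul_eq_mul, inv_mul_cancel_left₀ (ne_of_gt ht)]
    rw [hradial]
    exact mul_nonneg (inv_nonneg.mpr (le_of_lt ht)) (h _)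
  simpa using hmono Set.self_mem_Ici (Set.mem_Ici.mpr zero_le_one) zero_le_one

theorem ContDiff.gradient {E : Type*} [NormedAddCommGroup E] [InnerProductSpace ℝ E]
    [CompleteSpace E] {f : E → ℝ} {n : WithTop ℕ∞} (hf : ContDiff ℝ (n + 1) f) :
    ContDiff ℝ n (gradient f) :=
  (InnerProductSpace.toDual ℝ E).symm.contDiff.comp (hf.fderiv_right le_rfl)

theorem stmt_0_general (p : ℝ)
    (F : EuclideanSpace ℝ (Fin 4) → ℝ)
    (hF : ContDiff ℝ 2 F) (hF0 : F 0 = 0)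
    (G : EuclideanSpace ℝ (Fin 4) → ℝ)
    (hG : ∀ w, G w = ⟪w, gradient F w⟫)
    (ha : ∀ w, ⟪w, gradient G w⟫ ≥ (p + 2) * G w) :
    ∀ w, G w ≥ (p + 2) * F w := by
  intro w
  have hFd : Differentiable ℝ F := hF.differentiable two_ne_zero
  have hGd : Differentiable ℝ G := by
    rw [show G = fun w => ⟪w, gradient F w⟫ from funext hG]
    exact (contDiff_id.inner ℝ (hF.gradient (n := 1))).differentiable one_ne_zero
  have hradial : ∀ x, 0 ≤ fderiv ℝ (fun x => G x - (p + 2) * F x) x x := by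
    intro x
    have hx := ha x
    rw [hG x, inner_gradient_right, inner_gradient_right, conj_trivial, conj_trivial] at hx
    rw [fderiv_fun_sub (hGd x) ((hFd x).const_mul _), fderiv_const_mul (hFd x), sub_apply,
      smul_apply, smul_eq_mul]
    linarith
  have hmono : G 0 - (p + 2) * F 0 ≤ G w - (p + 2) * F w :=
    apply_zero_le_of_fderiv_apply_self_nonneg (hGd.fun_sub (hFd.const_mul _)) hradial w
  rw [hG 0, inner_zero_left, hF0] at hmono
  linarith

/-- Lemma (Esfahani–Levandosky type), item (i): under condition (a),
`G(w) ≥ (p+2) F(w)` for every `w ∈ ℝ⁴`. -/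
theorem stmt_0 (p : ℝ) (hp : 0 < p)
    (F : EuclideanSpace ℝ (Fin 4) → ℝ)
    (hF : ContDiff ℝ 2 F) (hF0 : F 0 = 0)
    (G : EuclideanSpace ℝ (Fin 4) → ℝ)
    (hG : ∀ w, G w = ⟪w, gradient F w⟫)
    (ha : ∀ w, ⟪w, gradient G w⟫ ≥ (p + 2) * G w) :
    ∀ w, G w ≥ (p + 2) * F w :=
  stmt_0_general p F hF hF0 G hG ha
end

section
/- Under the assumptions above, the gradient of F vanishes at the origin: ∇F(0) = 0. -/
/-!
Write `c = p + 2` and `v = ∇F(0)`. Along the ray `t ↦ t • v`, dividing `c G(tv) ≤ DG(tv)(tv)` by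
`t > 0` gives `c G(tv)/t ≤ DG(tv) v`. As `t → 0⁺` both sides tend to `DG(0) v` (the left one because
`G(0) = 0`, the right one because `G` is `C¹`), so `(c - 1) DG(0) v ≤ 0`. For `G(w) = ⟪w, ∇F(w)⟫`
the product rule gives `DG(0) v = ⟪v, ∇F(0)⟫ = ‖∇F(0)‖²`, which is therefore `≤ 0`.
-/

open RealInnerProductSpace

open Filter Topology

theorem fderiv_zero_apply_nonpos_of_mul_le_fderiv_apply_self
    {E : Type*} [NormedAddCommGroup E] [NormedSpace ℝ E] {G : E → ℝ} {c : ℝ} (hc : 1 < c)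
    (hG : ContDiff ℝ 1 G) (hG0 : G 0 = 0) (h : ∀ w, c * G w ≤ fderiv ℝ G w w) (v : E) :
    fderiv ℝ G 0 v ≤ 0 := by
  have hray : HasDerivAt (fun t : ℝ => G (t • v)) (fderiv ℝ G 0 v) 0 := by
    have hline : HasDerivAt (fun t : ℝ => t • v) v 0 := by
      simpa using (hasDerivAt_id (0 : ℝ)).smul_const v
    exact (hG.differentiable one_ne_zero 0).hasFDerivAt.comp_hasDerivAt_of_eq 0 hline
      (zero_smul ℝ v).symm
  have hslope : Tendsto (fun t : ℝ => t⁻¹ * G (t • v)) (𝓝[>] 0) (𝓝 (fderiv ℝ G 0 v)) := by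
    simpa [hG0] using hray.tendsto_slope_zero_right
  have hderiv : Tendsto (fun t : ℝ => fderiv ℝ G (t • v) v) (𝓝[>] 0) (𝓝 (fderiv ℝ G 0 v)) := by
    have hcont : Continuous fun t : ℝ => fderiv ℝ G (t • v) v :=
      (hG.continuous_fderiv_apply one_ne_zero).comp
        ((continuous_id.smul continuous_const).prodMk continuous_const)
    simpa using hcont.continuousWithinAt.tendsto (x := 0) (s := Set.Ioi 0)
  have hineq : ∀ᶠ t in 𝓝[>] (0 : ℝ), c * (t⁻¹ * G (t • v)) ≤ fderiv ℝ G (t • v) v := by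
    filter_upwards [self_mem_nhdsWithin] with t (ht : 0 < t)
    have hw := h (t • v)
    rw [map_smul, smul_eq_mul] at hw
    rwa [← mul_assoc, mul_comm c, mul_assoc, inv_mul_le_iff₀ ht]
  have hlim := le_of_tendsto_of_tendsto (hslope.const_mul c) hderiv hineq
  nlinarith

theorem contDiff_gradient {E : Type*} [NormedAddCommGroup E] [InnerProductSpace ℝ E]
    [CompleteSpace E] {F : E → ℝ} {n : WithTop ℕ∞} (hF : ContDiff ℝ (n + 1) F) :
    ContDiff ℝ n (gradient F) :=
  (InnerProductSpace.toDual ℝ E).symm.contDiff.comp (hF.fderiv_right le_rfl)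

theorem fderiv_inner_id_left_at_zero_apply {E : Type*} [NormedAddCommGroup E]
    [InnerProductSpace ℝ E] {g : E → E} (hg : DifferentiableAt ℝ g 0) (u : E) :
    fderiv ℝ (fun w => ⟪w, g w⟫) 0 u = ⟪u, g 0⟫ := by
  have hinner := (hasFDerivAt_id (0 : E)).inner ℝ hg.hasFDerivAt
  rw [show (fun w => ⟪w, g w⟫) = fun w => ⟪id w, g w⟫ from rfl, hinner.fderiv]
  simp [fderivInnerCLM_apply]

theorem stmt_3_general (p : ℝ) (hp : 0 < p)
    (F : EuclideanSpace ℝ (Fin 4) → ℝ)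
    (hF : ContDiff ℝ 2 F)
    (G : EuclideanSpace ℝ (Fin 4) → ℝ)
    (hG : ∀ w, G w = ⟪w, gradient F w⟫)
    (ha : ∀ w, ⟪w, gradient G w⟫ ≥ (p + 2) * G w) :
    gradient F 0 = 0 := by
  obtain rfl : G = fun w => ⟪w, gradient F w⟫ := funext hG
  have hgradF : ContDiff ℝ 1 (gradient F) := contDiff_gradient hF
  have hGC1 : ContDiff ℝ 1 fun w => ⟪w, gradient F w⟫ := contDiff_id.inner ℝ hgradF
  have hnonpos := fderiv_zero_apply_nonpos_of_mul_le_fderiv_apply_self (c := p + 2)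
    (by linarith) hGC1 (inner_zero_left _) (fun w => by simpa using ha w) (gradient F 0)
  rw [fderiv_inner_id_left_at_zero_apply (hgradF.differentiable one_ne_zero 0)] at hnonpos
  exact real_inner_self_nonpos.mp hnonpos

/-- Under condition (a), the gradient of `F` vanishes at the origin. -/
theorem stmt_3 (p : ℝ) (hp : 0 < p)
    (F : EuclideanSpace ℝ (Fin 4) → ℝ)
    (hF : ContDiff ℝ 2 F) (hF0 : F 0 = 0)
    (G : EuclideanSpace ℝ (Fin 4) → ℝ)
    (hG : ∀ w, G w = ⟪w, gradient F w⟫)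
    (ha : ∀ w, ⟪w, gradient G w⟫ ≥ (p + 2) * G w) :
    gradient F 0 = 0 :=
  stmt_3_general p hp F hF G hG ha
end

section
/- Under the assumptions above, let u, v : ℝ → ℝ be continuously differentiable and set W(x) = (u(x), u'(x), v(x), v'(x)) ∈ ℝ⁴. Let α > 0 and assume that the functions x ↦ G(W(x)) and x ↦ G(α W(x)) are Lebesgue integrable on ℝ. If α ≥ 1 then ∫_ℝ G(α W(x)) dx ≥ α^{p+2} ∫_ℝ G(W(x)) dx, and if 0 < α ≤ 1 then ∫_ℝ G(α W(x)) dx ≤ α^{p+2} ∫_ℝ G(W(x)) dx. -/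
/-! Condition (a) says exactly that `t ↦ t ^ (-(p+2)) * G (t • w)` has nonnegative derivative
on `(0, ∞)`. Comparing its values at `1` and `α` gives `G (α • w) ≥ α ^ (p+2) * G w` for `α ≥ 1`
and the reverse inequality for `α ≤ 1`, pointwise in `w`; integrating along `w = W x` gives the
theorem. -/

open RealInnerProductSpace MeasureTheory Set
open scoped Gradient

section
variable {E : Type*} [NormedAddCommGroup E] [InnerProductSpace ℝ E] [CompleteSpace E]

theorem differentiable_inner_self_gradient {F : E → ℝ} (hF : ContDiff ℝ 2 F) :
    Differentiable ℝ fun w => ⟪w, ∇ F w⟫ := by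
  have hgrad : ContDiff ℝ 1 (∇ F) :=
    (InnerProductSpace.toDual ℝ E).symm.toContinuousLinearEquiv.contDiff.comp
      (hF.fderiv_right (by norm_num))
  exact (contDiff_id.inner ℝ hgrad).differentiable one_ne_zero

variable {G : E → ℝ} {q : ℝ}

-- `t ^ (-q) * G (t • w)` has derivative `t ^ (-q-1) * (⟪t • w, ∇ G (t • w)⟫ - q * G (t • w))`.
theorem monotoneOn_rpow_neg_mul_apply_smul (hG : Differentiable ℝ G)
    (h : ∀ w, q * G w ≤ ⟪w, ∇ G w⟫) (w : E) :
    MonotoneOn (fun t : ℝ => t ^ (-q) * G (t • w)) (Ioi 0) := by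
  have hderiv : ∀ t ∈ Ioi (0 : ℝ), HasDerivAt (fun t : ℝ => t ^ (-q) * G (t • w))
      (-q * t ^ (-q - 1) * G (t • w) + t ^ (-q) * fderiv ℝ G (t • w) w) t := by
    intro t ht
    have hsmul : HasDerivAt (fun t : ℝ => t • w) w t := by
      simpa using (hasDerivAt_id t).smul_const w
    exact (Real.hasDerivAt_rpow_const (Or.inl (ne_of_gt ht))).mul
      ((hG (t • w)).hasFDerivAt.comp_hasDerivAt t hsmul)
  refine monotoneOn_of_hasDerivWithinAt_nonneg (convex_Ioi 0)
    (fun t ht => (hderiv t ht).continuousAt.continuousWithinAt)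
    (fun t ht => (hderiv t (interior_subset ht)).hasDerivWithinAt) fun t ht => ?_
  rw [interior_Ioi] at ht
  have hpow : t ^ (-q) = t ^ (-q - 1) * t := by
    rw [← Real.rpow_add_one (ne_of_gt ht), sub_add_cancel]
  have hinner : ⟪t • w, ∇ G (t • w)⟫ = t * fderiv ℝ G (t • w) w := by
    rw [real_inner_smul_left, inner_gradient_right]; rfl
  have key : 0 ≤ t ^ (-q - 1) * (⟪t • w, ∇ G (t • w)⟫ - q * G (t • w)) :=
    mul_nonneg (Real.rpow_nonneg (le_of_lt ht) _) (sub_nonneg.mpr (h _))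
  rw [hinner] at key
  rw [hpow]
  linarith

theorem rpow_mul_le_apply_smul_of_one_le (hG : Differentiable ℝ G)
    (h : ∀ w, q * G w ≤ ⟪w, ∇ G w⟫) (w : E) {α : ℝ} (hα : 1 ≤ α) :
    α ^ q * G w ≤ G (α • w) := by
  have hα0 : 0 < α := zero_lt_one.trans_le hα
  have := monotoneOn_rpow_neg_mul_apply_smul hG h w (mem_Ioi.2 one_pos) (mem_Ioi.2 hα0) hα
  simp only [Real.one_rpow, one_smul, one_mul] at this
  rw [Real.rpow_neg hα0.le] at this
  calc α ^ q * G w ≤ α ^ q * ((α ^ q)⁻¹ * G (α • w)) := by gcongr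
    _ = G (α • w) := mul_inv_cancel_left₀ (Real.rpow_pos_of_pos hα0 q).ne' _

theorem apply_smul_le_rpow_mul_of_le_one (hG : Differentiable ℝ G)
    (h : ∀ w, q * G w ≤ ⟪w, ∇ G w⟫) (w : E) {α : ℝ} (hα0 : 0 < α) (hα : α ≤ 1) :
    G (α • w) ≤ α ^ q * G w := by
  have := monotoneOn_rpow_neg_mul_apply_smul hG h w (mem_Ioi.2 hα0) (mem_Ioi.2 one_pos) hα
  simp only [Real.one_rpow, one_smul, one_mul] at this
  rw [Real.rpow_neg hα0.le] at this
  calc G (α • w) = α ^ q * ((α ^ q)⁻¹ * G (α • w)) :=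
        (mul_inv_cancel_left₀ (Real.rpow_pos_of_pos hα0 q).ne' _).symm
    _ ≤ α ^ q * G w := by gcongr

end

theorem stmt_5_general (p : ℝ)
    (F : EuclideanSpace ℝ (Fin 4) → ℝ)
    (hF : ContDiff ℝ 2 F)
    (G : EuclideanSpace ℝ (Fin 4) → ℝ)
    (hG : ∀ w, G w = ⟪w, gradient F w⟫)
    (ha : ∀ w, ⟪w, gradient G w⟫ ≥ (p + 2) * G w)
    (W : ℝ → EuclideanSpace ℝ (Fin 4))
    (α : ℝ) (hα : 0 < α)
    (hint : Integrable (fun x => G (W x)))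
    (hint' : Integrable (fun x => G (α • W x))) :
    (1 ≤ α → ∫ x : ℝ, G (α • W x) ≥ α ^ (p + 2) * ∫ x : ℝ, G (W x)) ∧
    (α ≤ 1 → ∫ x : ℝ, G (α • W x) ≤ α ^ (p + 2) * ∫ x : ℝ, G (W x)) := by
  have hGd : Differentiable ℝ G := by
    rw [show G = fun w => ⟪w, ∇ F w⟫ from funext hG]
    exact differentiable_inner_self_gradient hF
  refine ⟨fun hα1 => ?_, fun hα1 => ?_⟩
  · rw [ge_iff_le, ← integral_const_mul]
    exact integral_mono (hint.const_mul _) hint'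
      fun x => rpow_mul_le_apply_smul_of_one_le hGd ha (W x) hα1
  · rw [← integral_const_mul]
    exact integral_mono hint' (hint.const_mul _)
      fun x => apply_smul_le_rpow_mul_of_le_one hGd ha (W x) hα hα1

/-- Lemma (Esfahani–Levandosky type), item (iv): under condition (a), for
`W(x) = (u(x), u'(x), v(x), v'(x))`, the functional `N(w) = ∫ G(W)` satisfies
`N(αW) ≥ α^(p+2) N(W)` for `α ≥ 1` and `N(αW) ≤ α^(p+2) N(W)` for `0 < α ≤ 1`. -/
theorem stmt_5 (p : ℝ) (hp : 0 < p)
    (F : EuclideanSpace ℝ (Fin 4) → ℝ)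
    (hF : ContDiff ℝ 2 F) (hF0 : F 0 = 0)
    (G : EuclideanSpace ℝ (Fin 4) → ℝ)
    (hG : ∀ w, G w = ⟪w, gradient F w⟫)
    (ha : ∀ w, ⟪w, gradient G w⟫ ≥ (p + 2) * G w)
    (u v : ℝ → ℝ) (hu : ContDiff ℝ 1 u) (hv : ContDiff ℝ 1 v)
    (W : ℝ → EuclideanSpace ℝ (Fin 4))
    (hW : ∀ x, W x = (WithLp.equiv 2 (Fin 4 → ℝ)).symm ![u x, deriv u x, v x, deriv v x])
    (α : ℝ) (hα : 0 < α)
    (hint : Integrable (fun x => G (W x)))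
    (hint' : Integrable (fun x => G (α • W x))) :
    (1 ≤ α → ∫ x : ℝ, G (α • W x) ≥ α ^ (p + 2) * ∫ x : ℝ, G (W x)) ∧
    (α ≤ 1 → ∫ x : ℝ, G (α • W x) ≤ α ^ (p + 2) * ∫ x : ℝ, G (W x)) :=
  stmt_5_general p F hF G hG ha W α hα hint hint'
end

section
/- Let a, c < 0, a₂, c₂ > 0, b > 0, b₂ > 0 and ω ∈ ℝ satisfy ω² ≤ 1, b²ω² ≤ ac, and b₂²ω² ≤ a₂c₂. Then for all real numbers ψ₀, ψ₁, ψ₂, v₀, v₁, v₂ one has ρ(ψ₀, ψ₁, ψ₂, v₀, v₁, v₂) ≥ 0. -/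
/-! The density splits into three binary quadratic forms, in `(ψ₀, v₀)`, `(ψ₁, v₁)` and
`(ψ₂, v₂)`, with coefficient pairs `(1, 1)`, `(-c, -a)`, `(c₂, a₂)` and cross terms `ω`, `ωb`,
`ωb₂`. Each has nonnegative diagonal and nonnegative determinant, hence is
positive semidefinite. -/

theorem mul_sq_add_mul_sq_sub_two_mul_mul_nonneg {p q r : ℝ} (hp : 0 ≤ p) (hq : 0 ≤ q)
    (hr : r ^ 2 ≤ p * q) (x y : ℝ) : 0 ≤ p * x ^ 2 + q * y ^ 2 - 2 * r * (x * y) := by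
  rcases hp.eq_or_lt with rfl | hp
  · have hr0 : r = 0 := by nlinarith
    subst hr0
    nlinarith [sq_nonneg y]
  · -- `p · (p x² + q y² - 2 r x y) = (p x - r y)² + (p q - r²) y²`
    nlinarith [sq_nonneg (p * x - r * y), mul_nonneg (sub_nonneg.2 hr) (sq_nonneg y)]

theorem stmt_7_general (a c a₂ c₂ b b₂ ω : ℝ)
    (ha : a < 0) (hc : c < 0) (ha₂ : 0 < a₂) (hc₂ : 0 < c₂)
    (hω1 : ω ^ 2 ≤ 1) (hω2 : b ^ 2 * ω ^ 2 ≤ a * c) (hω3 : b₂ ^ 2 * ω ^ 2 ≤ a₂ * c₂)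
    (ψ₀ ψ₁ ψ₂ v₀ v₁ v₂ : ℝ) :
    ψ₀ ^ 2 - c * ψ₁ ^ 2 + c₂ * ψ₂ ^ 2 + v₀ ^ 2 - a * v₁ ^ 2 + a₂ * v₂ ^ 2
      - 2 * ω * (ψ₀ * v₀ + b * ψ₁ * v₁ + b₂ * ψ₂ * v₂) ≥ 0 := by
  have h₀ := mul_sq_add_mul_sq_sub_two_mul_mul_nonneg zero_le_one zero_le_one
    (by rwa [one_mul]) ψ₀ v₀
  have h₁ := mul_sq_add_mul_sq_sub_two_mul_mul_nonneg (neg_nonneg.2 hc.le) (neg_nonneg.2 ha.le)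
    (r := ω * b) (by linarith) ψ₁ v₁
  have h₂ := mul_sq_add_mul_sq_sub_two_mul_mul_nonneg hc₂.le ha₂.le
    (r := ω * b₂) (by linarith) ψ₂ v₂
  linarith

/-- Nonnegativity of the quadratic density `ρ` when `ω² ≤ 1`, `b²ω² ≤ ac` and
`b₂²ω² ≤ a₂c₂`. -/
theorem stmt_7 (a c a₂ c₂ b b₂ ω : ℝ)
    (ha : a < 0) (hc : c < 0) (ha₂ : 0 < a₂) (hc₂ : 0 < c₂)
    (hb : 0 < b) (hb₂ : 0 < b₂)
    (hω1 : ω ^ 2 ≤ 1) (hω2 : b ^ 2 * ω ^ 2 ≤ a * c) (hω3 : b₂ ^ 2 * ω ^ 2 ≤ a₂ * c₂)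
    (ψ₀ ψ₁ ψ₂ v₀ v₁ v₂ : ℝ) :
    ψ₀ ^ 2 - c * ψ₁ ^ 2 + c₂ * ψ₂ ^ 2 + v₀ ^ 2 - a * v₁ ^ 2 + a₂ * v₂ ^ 2
      - 2 * ω * (ψ₀ * v₀ + b * ψ₁ * v₁ + b₂ * ψ₂ * v₂) ≥ 0 :=
  stmt_7_general a c a₂ c₂ b b₂ ω ha hc ha₂ hc₂ hω1 hω2 hω3 ψ₀ ψ₁ ψ₂ v₀ v₁ v₂
end

section
/- Let a, c < 0, a₂, c₂ > 0, b > 0, b₂ > 0 and ω ∈ ℝ satisfy 0 < |ω| < min{1, −a/b, −c/b, a₂/b₂, c₂/b₂}. Set M₁ = min{1 − |ω|, −c − b|ω|, −a − b|ω|, a₂ − b₂|ω|, c₂ − b₂|ω|}. Then M₁ > 0 and for all real numbers ψ₀, ψ₁, ψ₂, v₀, v₁, v₂ one has M₁ · σ(ψ₀, ψ₁, ψ₂, v₀, v₁, v₂) ≤ ρ(ψ₀, ψ₁, ψ₂, v₀, v₁, v₂). -/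
/-!
Each pair `(ψᵢ, vᵢ)` is coupled only through the cross term `−2ωβ ψᵢ vᵢ`, and
`2ω ψ v ≤ |ω| (ψ² + v²)`. So on each pair `ρ` dominates the diagonal form with coefficients
diminished by `β|ω|`, all of which are at least `M₁`; the smallness of `|ω|` makes them positive.
-/

theorem two_mul_mul_le_abs_mul_add_sq (ω x y : ℝ) :
    2 * ω * (x * y) ≤ |ω| * (x ^ 2 + y ^ 2) := by
  have sum_of_squares : |ω| * (x ^ 2 + y ^ 2) - 2 * ω * (x * y) =
      ((|ω| + ω) * (x - y) ^ 2 + (|ω| - ω) * (x + y) ^ 2) / 2 := by ring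
  have hplus : 0 ≤ |ω| + ω := by linarith [neg_abs_le ω]
  have hminus : 0 ≤ |ω| - ω := sub_nonneg.mpr (le_abs_self ω)
  have hnonneg := add_nonneg (mul_nonneg hplus (sq_nonneg (x - y))) (mul_nonneg hminus (sq_nonneg (x + y)))
  linarith

theorem mul_add_sq_le_of_le_sub_mul_abs {m p q β ω : ℝ} (hβ : 0 ≤ β)
    (hp : m ≤ p - β * |ω|) (hq : m ≤ q - β * |ω|) (x y : ℝ) :
    m * (x ^ 2 + y ^ 2) ≤ p * x ^ 2 + q * y ^ 2 - 2 * ω * (β * x * y) := by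
  have hcross := mul_le_mul_of_nonneg_left (two_mul_mul_le_abs_mul_add_sq ω x y) hβ
  have hx := mul_le_mul_of_nonneg_right hp (sq_nonneg x)
  have hy := mul_le_mul_of_nonneg_right hq (sq_nonneg y)
  linarith

theorem mul_abs_lt_of_abs_lt_div {x β ω : ℝ} (hβ : 0 < β) (h : |ω| < x / β) :
    β * |ω| < x :=
  (lt_div_iff₀' hβ).mp h

theorem stmt_8_general (a c a₂ c₂ b b₂ ω : ℝ)
    (hb : 0 < b) (hb₂ : 0 < b₂)
    (hω : |ω| < min 1 (min (-a / b) (min (-c / b) (min (a₂ / b₂) (c₂ / b₂)))))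
    (M₁ : ℝ)
    (hM₁ : M₁ = min (1 - |ω|) (min (-c - b * |ω|)
      (min (-a - b * |ω|) (min (a₂ - b₂ * |ω|) (c₂ - b₂ * |ω|))))) :
    0 < M₁ ∧ ∀ ψ₀ ψ₁ ψ₂ v₀ v₁ v₂ : ℝ,
      M₁ * (ψ₀ ^ 2 + ψ₁ ^ 2 + ψ₂ ^ 2 + v₀ ^ 2 + v₁ ^ 2 + v₂ ^ 2) ≤
        ψ₀ ^ 2 - c * ψ₁ ^ 2 + c₂ * ψ₂ ^ 2 + v₀ ^ 2 - a * v₁ ^ 2 + a₂ * v₂ ^ 2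
          - 2 * ω * (ψ₀ * v₀ + b * ψ₁ * v₁ + b₂ * ψ₂ * v₂) := by
  simp only [lt_min_iff] at hω
  obtain ⟨hω1, hωa, hωc, hωa₂, hωc₂⟩ := hω
  have ha := mul_abs_lt_of_abs_lt_div hb hωa
  have hc := mul_abs_lt_of_abs_lt_div hb hωc
  have ha₂ := mul_abs_lt_of_abs_lt_div hb₂ hωa₂
  have hc₂ := mul_abs_lt_of_abs_lt_div hb₂ hωc₂
  have hM₁_le : M₁ ≤ 1 - |ω| ∧ M₁ ≤ -c - b * |ω| ∧ M₁ ≤ -a - b * |ω| ∧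
      M₁ ≤ a₂ - b₂ * |ω| ∧ M₁ ≤ c₂ - b₂ * |ω| := by
    simpa only [le_min_iff] using hM₁.le
  obtain ⟨h₀, h₁, h₁', h₂', h₂⟩ := hM₁_le
  refine ⟨?_, fun ψ₀ ψ₁ ψ₂ v₀ v₁ v₂ => ?_⟩
  · rw [hM₁]
    simp only [lt_min_iff]
    refine ⟨?_, ?_, ?_, ?_, ?_⟩ <;> linarith
  · have pair₀ := mul_add_sq_le_of_le_sub_mul_abs zero_le_one
      (by simpa using h₀) (by simpa using h₀) ψ₀ v₀
    have pair₁ := mul_add_sq_le_of_le_sub_mul_abs hb.le h₁ h₁' ψ₁ v₁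
    have pair₂ := mul_add_sq_le_of_le_sub_mul_abs hb₂.le h₂ h₂' ψ₂ v₂
    linarith

/-- Lower bound `M₁ σ ≤ ρ` for the quadratic density, with
`M₁ = min{1 − |ω|, −c − b|ω|, −a − b|ω|, a₂ − b₂|ω|, c₂ − b₂|ω|} > 0`, when
`0 < |ω| < min{1, −a/b, −c/b, a₂/b₂, c₂/b₂}`. -/
theorem stmt_8 (a c a₂ c₂ b b₂ ω : ℝ)
    (ha : a < 0) (hc : c < 0) (ha₂ : 0 < a₂) (hc₂ : 0 < c₂)
    (hb : 0 < b) (hb₂ : 0 < b₂)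
    (hω0 : 0 < |ω|)
    (hω : |ω| < min 1 (min (-a / b) (min (-c / b) (min (a₂ / b₂) (c₂ / b₂)))))
    (M₁ : ℝ)
    (hM₁ : M₁ = min (1 - |ω|) (min (-c - b * |ω|)
      (min (-a - b * |ω|) (min (a₂ - b₂ * |ω|) (c₂ - b₂ * |ω|))))) :
    0 < M₁ ∧ ∀ ψ₀ ψ₁ ψ₂ v₀ v₁ v₂ : ℝ,
      M₁ * (ψ₀ ^ 2 + ψ₁ ^ 2 + ψ₂ ^ 2 + v₀ ^ 2 + v₁ ^ 2 + v₂ ^ 2) ≤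
        ψ₀ ^ 2 - c * ψ₁ ^ 2 + c₂ * ψ₂ ^ 2 + v₀ ^ 2 - a * v₁ ^ 2 + a₂ * v₂ ^ 2
          - 2 * ω * (ψ₀ * v₀ + b * ψ₁ * v₁ + b₂ * ψ₂ * v₂) :=
  stmt_8_general a c a₂ c₂ b b₂ ω hb hb₂ hω M₁ hM₁
end

section
/- Let a, c < 0, a₂, c₂ > 0, b > 0, b₂ > 0 and ω ∈ ℝ satisfy 0 < |ω| < min{1, −a/b, −c/b, a₂/b₂, c₂/b₂}. Set M₁ = min{1 − |ω|, −c − b|ω|, −a − b|ω|, a₂ − b₂|ω|, c₂ − b₂|ω|} and M₂ = max{1 + |ω|, |c| + b|ω|, |a| + b|ω|, a₂ + b₂|ω|, c₂ + b₂|ω|}. Let ψ, v : ℝ → ℝ be twice continuously differentiable functions such that ψ, ψ', ψ'', v, v', v'' all belong to L²(ℝ) (i.e., each is square-integrable with respect to Lebesgue measure). Then the integrand of I_ω is integrable and M₁ ‖(ψ,v)‖²_X ≤ I_ω(ψ, v) ≤ M₂ ‖(ψ,v)‖²_X, where I_ω(ψ,v) = ∫_ℝ [ψ² − c(ψ')²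 + c₂(ψ'')² + v² − a(v')² + a₂(v'')² − 2ω(ψv + bψ'v' + b₂ψ''v'')] dx and ‖(ψ,v)‖²_X = ∫_ℝ [ψ² + (ψ')² + (ψ'')² + v² + (v')² + (v'')²] dx. -/
/-! Pointwise, the integrand of `I_ω` splits into three coupled forms
`α p² + β q² - 2ωγ pq` (in `(ψ, v)`, `(ψ', v')` and `(ψ'', v'')`), and the AM-GM bound
`|2ω pq| ≤ |ω| (p² + q²)` traps each between `M₁ (p² + q²)` and `M₂ (p² + q²)`.
Integrating this pointwise sandwich gives integrability and both inequalities. -/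

open MeasureTheory

lemma abs_two_mul_mul_mul_le (ω p q : ℝ) : |2 * ω * (p * q)| ≤ |ω| * (p ^ 2 + q ^ 2) :=
  calc |2 * ω * (p * q)| = |ω| * (2 * |p| * |q|) := by simp only [abs_mul, abs_two]; ring
    _ ≤ |ω| * (|p| ^ 2 + |q| ^ 2) := by gcongr; exact two_mul_le_add_sq _ _
    _ = |ω| * (p ^ 2 + q ^ 2) := by rw [sq_abs, sq_abs]

section CoupledForm

variable {α β γ ω : ℝ} (p q : ℝ)

lemma mul_add_sq_le_coupledForm {m : ℝ} (hγ : 0 ≤ γ) (hα : m ≤ α - γ * |ω|)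
    (hβ : m ≤ β - γ * |ω|) :
    m * (p ^ 2 + q ^ 2) ≤ α * p ^ 2 + β * q ^ 2 - 2 * ω * (γ * (p * q)) := by
  have hcross := mul_le_mul_of_nonneg_left (le_of_abs_le (abs_two_mul_mul_mul_le ω p q)) hγ
  linarith [mul_le_mul_of_nonneg_right hα (sq_nonneg p),
    mul_le_mul_of_nonneg_right hβ (sq_nonneg q)]

lemma coupledForm_le_mul_add_sq {M : ℝ} (hγ : 0 ≤ γ) (hα : α + γ * |ω| ≤ M)
    (hβ : β + γ * |ω| ≤ M) :
    α * p ^ 2 + β * q ^ 2 - 2 * ω * (γ * (p * q)) ≤ M * (p ^ 2 + q ^ 2) := by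
  have hcross := mul_le_mul_of_nonneg_left (neg_le_of_abs_le (abs_two_mul_mul_mul_le ω p q)) hγ
  linarith [mul_le_mul_of_nonneg_right hα (sq_nonneg p),
    mul_le_mul_of_nonneg_right hβ (sq_nonneg q)]

end CoupledForm

section Sandwich

variable {X : Type*} [MeasurableSpace X] {μ : Measure X} {F G : X → ℝ} {m M : ℝ}

lemma integrable_and_integral_le_of_const_mul_le_of_le_const_mul
    (hF : AEStronglyMeasurable F μ) (hG : Integrable G μ)
    (hlow : ∀ x, m * G x ≤ F x) (hhigh : ∀ x, F x ≤ M * G x) :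
    Integrable F μ ∧ m * ∫ x, G x ∂μ ≤ ∫ x, F x ∂μ ∧ ∫ x, F x ∂μ ≤ M * ∫ x, G x ∂μ := by
  have hFint : Integrable F μ :=
    integrable_of_le_of_le hF (ae_of_all _ hlow) (ae_of_all _ hhigh)
      (hG.const_mul m) (hG.const_mul M)
  refine ⟨hFint, ?_, ?_⟩
  · rw [← integral_const_mul]
    exact integral_mono (hG.const_mul m) hFint hlow
  · rw [← integral_const_mul]
    exact integral_mono hFint (hG.const_mul M) hhigh

end Sandwich

section Energy

variable {a c a₂ c₂ b b₂ ω : ℝ} (x₀ x₁ x₂ y₀ y₁ y₂ : ℝ)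

lemma min_mul_sumSq_le_energy (hb : 0 ≤ b) (hb₂ : 0 ≤ b₂) :
    min (1 - |ω|) (min (-c - b * |ω|)
      (min (-a - b * |ω|) (min (a₂ - b₂ * |ω|) (c₂ - b₂ * |ω|))))
      * (x₀ ^ 2 + x₁ ^ 2 + x₂ ^ 2 + y₀ ^ 2 + y₁ ^ 2 + y₂ ^ 2) ≤
    x₀ ^ 2 - c * x₁ ^ 2 + c₂ * x₂ ^ 2 + y₀ ^ 2 - a * y₁ ^ 2 + a₂ * y₂ ^ 2
      - 2 * ω * (x₀ * y₀ + b * x₁ * y₁ + b₂ * x₂ * y₂) := by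
  set m := min (1 - |ω|) (min (-c - b * |ω|)
    (min (-a - b * |ω|) (min (a₂ - b₂ * |ω|) (c₂ - b₂ * |ω|))))
  have h₀ : m ≤ 1 - 1 * |ω| := by simp [m]
  have h₁ := mul_add_sq_le_coupledForm x₀ y₀ zero_le_one h₀ h₀
  have h₂ := mul_add_sq_le_coupledForm x₁ y₁ hb (by simp [m] : m ≤ -c - b * |ω|)
    (by simp [m] : m ≤ -a - b * |ω|)
  have h₃ := mul_add_sq_le_coupledForm x₂ y₂ hb₂ (by simp [m] : m ≤ c₂ - b₂ * |ω|)
    (by simp [m] : m ≤ a₂ - b₂ * |ω|)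
  linarith

lemma energy_le_max_mul_sumSq (hb : 0 ≤ b) (hb₂ : 0 ≤ b₂) :
    x₀ ^ 2 - c * x₁ ^ 2 + c₂ * x₂ ^ 2 + y₀ ^ 2 - a * y₁ ^ 2 + a₂ * y₂ ^ 2
      - 2 * ω * (x₀ * y₀ + b * x₁ * y₁ + b₂ * x₂ * y₂) ≤
    max (1 + |ω|) (max (|c| + b * |ω|)
      (max (|a| + b * |ω|) (max (a₂ + b₂ * |ω|) (c₂ + b₂ * |ω|))))
      * (x₀ ^ 2 + x₁ ^ 2 + x₂ ^ 2 + y₀ ^ 2 + y₁ ^ 2 + y₂ ^ 2) := by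
  set M := max (1 + |ω|) (max (|c| + b * |ω|)
    (max (|a| + b * |ω|) (max (a₂ + b₂ * |ω|) (c₂ + b₂ * |ω|))))
  have h₀ : 1 + 1 * |ω| ≤ M := by simp [M]
  have h₁ := coupledForm_le_mul_add_sq x₀ y₀ zero_le_one h₀ h₀
  have h₂ := coupledForm_le_mul_add_sq x₁ y₁ hb
    (by simp [M, neg_le_abs] : -c + b * |ω| ≤ M) (by simp [M, neg_le_abs] : -a + b * |ω| ≤ M)
  have h₃ := coupledForm_le_mul_add_sq x₂ y₂ hb₂ (by simp [M] : c₂ + b₂ * |ω| ≤ M)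
    (by simp [M] : a₂ + b₂ * |ω| ≤ M)
  linarith

end Energy

theorem stmt_10_general (a c a₂ c₂ b b₂ ω : ℝ)
    (hb : 0 < b) (hb₂ : 0 < b₂)
    (M₁ M₂ : ℝ)
    (hM₁ : M₁ = min (1 - |ω|) (min (-c - b * |ω|)
      (min (-a - b * |ω|) (min (a₂ - b₂ * |ω|) (c₂ - b₂ * |ω|)))))
    (hM₂ : M₂ = max (1 + |ω|) (max (|c| + b * |ω|)
      (max (|a| + b * |ω|) (max (a₂ + b₂ * |ω|) (c₂ + b₂ * |ω|)))))
    (ψ v : ℝ → ℝ) (hψ : ContDiff ℝ 2 ψ) (hv : ContDiff ℝ 2 v)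
    (hψ0 : Integrable (fun x => ψ x ^ 2))
    (hψ1 : Integrable (fun x => deriv ψ x ^ 2))
    (hψ2 : Integrable (fun x => iteratedDeriv 2 ψ x ^ 2))
    (hv0 : Integrable (fun x => v x ^ 2))
    (hv1 : Integrable (fun x => deriv v x ^ 2))
    (hv2 : Integrable (fun x => iteratedDeriv 2 v x ^ 2)) :
    Integrable (fun x => ψ x ^ 2 - c * deriv ψ x ^ 2 + c₂ * iteratedDeriv 2 ψ x ^ 2
        + v x ^ 2 - a * deriv v x ^ 2 + a₂ * iteratedDeriv 2 v x ^ 2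
        - 2 * ω * (ψ x * v x + b * deriv ψ x * deriv v x
          + b₂ * iteratedDeriv 2 ψ x * iteratedDeriv 2 v x)) ∧
    M₁ * ∫ x : ℝ, (ψ x ^ 2 + deriv ψ x ^ 2 + iteratedDeriv 2 ψ x ^ 2
        + v x ^ 2 + deriv v x ^ 2 + iteratedDeriv 2 v x ^ 2) ≤
      (∫ x : ℝ, (ψ x ^ 2 - c * deriv ψ x ^ 2 + c₂ * iteratedDeriv 2 ψ x ^ 2
        + v x ^ 2 - a * deriv v x ^ 2 + a₂ * iteratedDeriv 2 v x ^ 2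
        - 2 * ω * (ψ x * v x + b * deriv ψ x * deriv v x
          + b₂ * iteratedDeriv 2 ψ x * iteratedDeriv 2 v x))) ∧
    (∫ x : ℝ, (ψ x ^ 2 - c * deriv ψ x ^ 2 + c₂ * iteratedDeriv 2 ψ x ^ 2
        + v x ^ 2 - a * deriv v x ^ 2 + a₂ * iteratedDeriv 2 v x ^ 2
        - 2 * ω * (ψ x * v x + b * deriv ψ x * deriv v x
          + b₂ * iteratedDeriv 2 ψ x * iteratedDeriv 2 v x))) ≤
      M₂ * ∫ x : ℝ, (ψ x ^ 2 + deriv ψ x ^ 2 + iteratedDeriv 2 ψ x ^ 2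
        + v x ^ 2 + deriv v x ^ 2 + iteratedDeriv 2 v x ^ 2) := by
  subst hM₁ hM₂
  have := hψ.continuous
  have := hψ.continuous_deriv one_le_two
  have := hψ.continuous_iteratedDeriv 2 le_rfl
  have := hv.continuous
  have := hv.continuous_deriv one_le_two
  have := hv.continuous_iteratedDeriv 2 le_rfl
  exact integrable_and_integral_le_of_const_mul_le_of_le_const_mul
    (Continuous.aestronglyMeasurable (by fun_prop))
    (((((hψ0.add hψ1).add hψ2).add hv0).add hv1).add hv2)
    (fun x => min_mul_sumSq_le_energy _ _ _ _ _ _ hb.le hb₂.le)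
    (fun x => energy_le_max_mul_sumSq _ _ _ _ _ _ hb.le hb₂.le)

/-- Lemma (equivalence of `I_ω` with the squared `X = H² × H²` norm):
for `0 < |ω| < min{1, −a/b, −c/b, a₂/b₂, c₂/b₂}`, the integrand of `I_ω` is
integrable and `M₁‖(ψ,v)‖²_X ≤ I_ω(ψ,v) ≤ M₂‖(ψ,v)‖²_X`. -/
theorem stmt_10 (a c a₂ c₂ b b₂ ω : ℝ)
    (ha : a < 0) (hc : c < 0) (ha₂ : 0 < a₂) (hc₂ : 0 < c₂)
    (hb : 0 < b) (hb₂ : 0 < b₂)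
    (hω0 : 0 < |ω|)
    (hω : |ω| < min 1 (min (-a / b) (min (-c / b) (min (a₂ / b₂) (c₂ / b₂)))))
    (M₁ M₂ : ℝ)
    (hM₁ : M₁ = min (1 - |ω|) (min (-c - b * |ω|)
      (min (-a - b * |ω|) (min (a₂ - b₂ * |ω|) (c₂ - b₂ * |ω|)))))
    (hM₂ : M₂ = max (1 + |ω|) (max (|c| + b * |ω|)
      (max (|a| + b * |ω|) (max (a₂ + b₂ * |ω|) (c₂ + b₂ * |ω|)))))
    (ψ v : ℝ → ℝ) (hψ : ContDiff ℝ 2 ψ) (hv : ContDiff ℝ 2 v)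
    (hψ0 : Integrable (fun x => ψ x ^ 2))
    (hψ1 : Integrable (fun x => deriv ψ x ^ 2))
    (hψ2 : Integrable (fun x => iteratedDeriv 2 ψ x ^ 2))
    (hv0 : Integrable (fun x => v x ^ 2))
    (hv1 : Integrable (fun x => deriv v x ^ 2))
    (hv2 : Integrable (fun x => iteratedDeriv 2 v x ^ 2)) :
    Integrable (fun x => ψ x ^ 2 - c * deriv ψ x ^ 2 + c₂ * iteratedDeriv 2 ψ x ^ 2
        + v x ^ 2 - a * deriv v x ^ 2 + a₂ * iteratedDeriv 2 v x ^ 2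
        - 2 * ω * (ψ x * v x + b * deriv ψ x * deriv v x
          + b₂ * iteratedDeriv 2 ψ x * iteratedDeriv 2 v x)) ∧
    M₁ * ∫ x : ℝ, (ψ x ^ 2 + deriv ψ x ^ 2 + iteratedDeriv 2 ψ x ^ 2
        + v x ^ 2 + deriv v x ^ 2 + iteratedDeriv 2 v x ^ 2) ≤
      (∫ x : ℝ, (ψ x ^ 2 - c * deriv ψ x ^ 2 + c₂ * iteratedDeriv 2 ψ x ^ 2
        + v x ^ 2 - a * deriv v x ^ 2 + a₂ * iteratedDeriv 2 v x ^ 2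
        - 2 * ω * (ψ x * v x + b * deriv ψ x * deriv v x
          + b₂ * iteratedDeriv 2 ψ x * iteratedDeriv 2 v x))) ∧
    (∫ x : ℝ, (ψ x ^ 2 - c * deriv ψ x ^ 2 + c₂ * iteratedDeriv 2 ψ x ^ 2
        + v x ^ 2 - a * deriv v x ^ 2 + a₂ * iteratedDeriv 2 v x ^ 2
        - 2 * ω * (ψ x * v x + b * deriv ψ x * deriv v x
          + b₂ * iteratedDeriv 2 ψ x * iteratedDeriv 2 v x))) ≤
      M₂ * ∫ x : ℝ, (ψ x ^ 2 + deriv ψ x ^ 2 + iteratedDeriv 2 ψ x ^ 2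
        + v x ^ 2 + deriv v x ^ 2 + iteratedDeriv 2 v x ^ 2) :=
  stmt_10_general a c a₂ c₂ b b₂ ω hb hb₂ M₁ M₂ hM₁ hM₂ ψ v hψ hv hψ0 hψ1 hψ2 hv0 hv1 hv2
end

section
/- Let 0 < p < q be real numbers and define F : ℝ⁴ → ℝ by F(x₁, x₂, x₃, x₄) = |x₁|^{q+2}/(q+2) + |x₁|^{p+2}/(p+2) + |x₃|^{q+2}/(q+2) + |x₃|^{p+2}/(p+2). Then F satisfies condition (b) with exponents q₁ = p and q₂ = q: there exists a constant C > 0 such that ‖D²F(w)‖ ≤ C(‖w‖^{p} + ‖w‖^{q}) for all w ∈ ℝ⁴, where D²F(w) is the second Fréchet derivative of F at w, ‖D²F(w)‖ its operator norm, and ‖w‖ the Euclidean norm. -/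
/-!
`F` is a sum of ridge functions `w ↦ g (w i)` with `g t = |t|^(q+2)/(q+2) + |t|^(p+2)/(p+2)`.
For a ridge function `g ∘ ℓ` the Hessian is `g''(ℓ w) • ℓ ⊗ ℓ`, of norm `|g''(ℓ w)| ‖ℓ‖²`, and here
`g''(t) = (q+1)|t|^q + (p+1)|t|^p` is at most `(q+1)(‖w‖^p + ‖w‖^q)` because `|w i| ≤ ‖w‖`.
-/

open Filter

lemma hasDerivAt_abs_rpow_mul_self {r : ℝ} (hr : 0 < r) (t : ℝ) :
    HasDerivAt (fun s : ℝ => |s| ^ r * s) ((r + 1) * |t| ^ r) t := by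
  rcases eq_or_ne t 0 with rfl | ht
  · -- the difference quotient at `0` is `|s| ^ r`
    rw [abs_zero, Real.zero_rpow hr.ne', mul_zero, hasDerivAt_iff_tendsto_slope]
    have hcont : ContinuousAt (fun s : ℝ => |s| ^ r) 0 :=
      (Real.continuousAt_rpow_const _ r (Or.inr hr.le)).comp continuous_abs.continuousAt
    have hlim : Tendsto (fun s : ℝ => |s| ^ r) (nhdsWithin 0 {0}ᶜ) (nhds 0) := by
      simpa [Real.zero_rpow hr.ne'] using hcont.tendsto.mono_left nhdsWithin_le_nhds
    refine hlim.congr' ?_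
    filter_upwards [self_mem_nhdsWithin] with s (hs : s ≠ 0)
    simp [slope_def_field, Real.zero_rpow hr.ne', hs]
  · have habs := (Real.hasDerivAt_rpow_const (p := r) (Or.inl (abs_ne_zero.mpr ht))).comp t
      (hasDerivAt_abs ht)
    refine (habs.mul (hasDerivAt_id t)).congr_deriv ?_
    have hsign : (SignType.sign t : ℝ) * t = |t| := by
      rcases ht.lt_or_gt with h | h <;> simp [h, abs_of_neg, abs_of_pos]
    have hpow : |t| ^ (r - 1) * |t| = |t| ^ r := by
      rw [← Real.rpow_add_one (abs_ne_zero.mpr ht), sub_add_cancel]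
    simp only [Function.comp_apply, id_eq, mul_one]
    rw [mul_assoc, hsign, mul_assoc, hpow]
    ring

lemma hasDerivAt_abs_rpow_add_two_div {r : ℝ} (hr : -1 < r) (t : ℝ) :
    HasDerivAt (fun s : ℝ => |s| ^ (r + 2) / (r + 2)) (|t| ^ r * t) t := by
  refine ((hasDerivAt_abs_rpow t (p := r + 2) (by linarith)).div_const (r + 2)).congr_deriv ?_
  have hr2 : r + 2 ≠ 0 := by linarith
  rw [add_sub_cancel_right]
  field_simp

section SecondDerivative

variable {𝕜 E F : Type*} [NontriviallyNormedField 𝕜] [NormedAddCommGroup E] [NormedSpace 𝕜 E]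
  [NormedAddCommGroup F] [NormedSpace 𝕜 F]

theorem norm_iteratedFDeriv_two_eq_of_hasFDerivAt {f : E → F} {f' : E → E →L[𝕜] F}
    {f'' : E →L[𝕜] E →L[𝕜] F} {x : E} (hf : ∀ y, HasFDerivAt f (f' y) y)
    (hf' : HasFDerivAt f' f'' x) :
    ‖iteratedFDeriv 𝕜 2 f x‖ = ‖f''‖ := by
  rw [← norm_iteratedFDeriv_fderiv, norm_iteratedFDeriv_one, funext fun y => (hf y).fderiv,
    hf'.fderiv]

end SecondDerivative

variable {E : Type*} [NormedAddCommGroup E] [NormedSpace ℝ E]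

theorem norm_iteratedFDeriv_two_sum_comp_le {ι : Type*} (s : Finset ι) (ℓ : ι → E →L[ℝ] ℝ)
    {g g' g'' : ℝ → ℝ} (hg : ∀ t, HasDerivAt g (g' t) t) (hg' : ∀ t, HasDerivAt g' (g'' t) t)
    (w : E) :
    ‖iteratedFDeriv ℝ 2 (fun v => ∑ i ∈ s, g (ℓ i v)) w‖ ≤ ∑ i ∈ s, |g'' (ℓ i w)| * ‖ℓ i‖ ^ 2 := by
  have hfirst : ∀ v, HasFDerivAt (fun v => ∑ i ∈ s, g (ℓ i v)) (∑ i ∈ s, g' (ℓ i v) • ℓ i) v :=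
    fun v => HasFDerivAt.fun_sum fun i _ => (hg _).comp_hasFDerivAt v (ℓ i).hasFDerivAt
  have hsecond : HasFDerivAt (fun v => ∑ i ∈ s, g' (ℓ i v) • ℓ i)
      (∑ i ∈ s, (g'' (ℓ i w) • ℓ i).smulRight (ℓ i)) w :=
    HasFDerivAt.fun_sum fun i _ => ((hg' _).comp_hasFDerivAt w (ℓ i).hasFDerivAt).smul_const (ℓ i)
  rw [norm_iteratedFDeriv_two_eq_of_hasFDerivAt hfirst hsecond]
  refine (norm_sum_le (E := E →L[ℝ] E →L[ℝ] ℝ) _ _).trans_eq (Finset.sum_congr rfl fun i _ => ?_)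
  rw [ContinuousLinearMap.norm_smulRight_apply, norm_smul, Real.norm_eq_abs]
  ring

lemma abs_add_mul_abs_rpow_le {p q t R : ℝ} (hp : 0 ≤ p) (hpq : p ≤ q) (ht : |t| ≤ R) :
    |(q + 1) * |t| ^ q + (p + 1) * |t| ^ p| ≤ (q + 1) * (R ^ p + R ^ q) := by
  have htq : |t| ^ q ≤ R ^ q := Real.rpow_le_rpow (abs_nonneg t) ht (hp.trans hpq)
  have htp : |t| ^ p ≤ R ^ p := Real.rpow_le_rpow (abs_nonneg t) ht hp
  have htp_nonneg : 0 ≤ |t| ^ p := by positivity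
  have htq_nonneg : 0 ≤ |t| ^ q := by positivity
  rw [abs_of_nonneg (by nlinarith)]
  nlinarith

lemma EuclideanSpace.norm_proj_le_one {ι : Type*} [Fintype ι] (i : ι) :
    ‖EuclideanSpace.proj (𝕜 := ℝ) i‖ ≤ 1 :=
  ContinuousLinearMap.opNorm_le_bound _ zero_le_one fun v => by
    simpa using PiLp.norm_apply_le v i

/-- The example nonlinearity
`F(x₁,x₂,x₃,x₄) = |x₁|^(q+2)/(q+2) + |x₁|^(p+2)/(p+2) + |x₃|^(q+2)/(q+2) + |x₃|^(p+2)/(p+2)`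
satisfies condition (b) with exponents `q₁ = p` and `q₂ = q`:
`‖D²F(w)‖ ≤ C(‖w‖^p + ‖w‖^q)` for all `w`. -/
theorem stmt_14 (p q : ℝ) (hp : 0 < p) (hpq : p < q)
    (F : EuclideanSpace ℝ (Fin 4) → ℝ)
    (hFdef : ∀ w : EuclideanSpace ℝ (Fin 4),
      F w = |w 0| ^ (q + 2) / (q + 2) + |w 0| ^ (p + 2) / (p + 2)
          + |w 2| ^ (q + 2) / (q + 2) + |w 2| ^ (p + 2) / (p + 2)) :
    ∃ C > 0, ∀ w : EuclideanSpace ℝ (Fin 4),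
      ‖iteratedFDeriv ℝ 2 F w‖ ≤ C * (‖w‖ ^ p + ‖w‖ ^ q) := by
  set g : ℝ → ℝ := fun t => |t| ^ (q + 2) / (q + 2) + |t| ^ (p + 2) / (p + 2)
  have hg (t : ℝ) : HasDerivAt g (|t| ^ q * t + |t| ^ p * t) t :=
    (hasDerivAt_abs_rpow_add_two_div (by linarith) t).add
      (hasDerivAt_abs_rpow_add_two_div (by linarith) t)
  have hg' (t : ℝ) : HasDerivAt (fun s => |s| ^ q * s + |s| ^ p * s)
      ((q + 1) * |t| ^ q + (p + 1) * |t| ^ p) t :=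
    (hasDerivAt_abs_rpow_mul_self (hp.trans hpq) t).add (hasDerivAt_abs_rpow_mul_self hp t)
  have hF : F = fun w => ∑ i ∈ {0, 2}, g (EuclideanSpace.proj i w) := by
    funext w
    simp only [hFdef, g, Finset.sum_pair (by decide : (0 : Fin 4) ≠ 2), PiLp.proj_apply]
    ring
  refine ⟨2 * (q + 1), by linarith [hp.trans hpq], fun w => ?_⟩
  have hterm (i : Fin 4) : |(q + 1) * |w i| ^ q + (p + 1) * |w i| ^ p| *
      ‖EuclideanSpace.proj (𝕜 := ℝ) i‖ ^ 2 ≤ (q + 1) * (‖w‖ ^ p + ‖w‖ ^ q) :=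
    (mul_le_of_le_one_right (abs_nonneg _)
      (pow_le_one₀ (norm_nonneg _) (EuclideanSpace.norm_proj_le_one i))).trans
      (abs_add_mul_abs_rpow_le hp.le hpq.le (by simpa using PiLp.norm_apply_le w i))
  calc ‖iteratedFDeriv ℝ 2 F w‖
      ≤ ∑ i ∈ {0, 2}, |(q + 1) * |w i| ^ q + (p + 1) * |w i| ^ p| *
          ‖EuclideanSpace.proj (𝕜 := ℝ) i‖ ^ 2 :=
        hF ▸ norm_iteratedFDeriv_two_sum_comp_le _ _ hg hg' w
    _ ≤ ∑ _i ∈ ({0, 2} : Finset (Fin 4)), (q + 1) * (‖w‖ ^ p + ‖w‖ ^ q) :=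
        Finset.sum_le_sum fun i _ => hterm i
    _ = 2 * (q + 1) * (‖w‖ ^ p + ‖w‖ ^ q) := by
        rw [Finset.sum_const, Finset.card_pair (by decide), nsmul_eq_mul]
        ring
end
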